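/- arXiv:1209.2131 — 6 statements merged into one kernel-verified Lean document; each statement's English description precedes it below -/
import Mathlib

section
/- In the star network setting, the quadratic-rule price of buyer zero increases at rate at most one in buyer zero's bid. Precisely: the function θ ↦ p_{0,θ} on [0,∞) is piecewise linear (there exist finitely many points 0 = t_0 < t_1 < ⋯ < t_m such that θ ↦ p_{0,θ} is affine on each interval [t_i, t_{i+1}] and on [t_m, ∞)), and for all real numbers θ, θ' with 0 ≤ θ ≤ θ' one has p_{0,θ'} − p_{0,θ} ≤ θ' − θ. -/
/-- The star network setting of Abhishek–Hajek. -/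
structure StarSetting where
  /-- number of arms -/
  J : ℕ
  hJ : 0 < J
  /-- number of leaf items on arm `j` -/
  n : Fin J → ℕ
  hn : ∀ j, 0 < n j
  /-- winning single-item bids -/
  b : (j : Fin J) → Fin (n j) → ℝ
  /-- losing single-item bids -/
  bl : (j : Fin J) → Fin (n j) → ℝ
  /-- losing single-item bid for item zero -/
  bl0 : ℝ
  /-- package bids -/
  C : Fin J → ℝ
  h_bid : ∀ j k, bl j k ≤ b j k
  h_pos : ∀ j, ∃ k, bl j k < b j k

namespace StarSetting

/-- Index of items (= winning buyers): `none` is item zero, `some ⟨j,k⟩` is item `(j,k)`. -/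
abbrev Idx (S : StarSetting) := Option ((j : Fin S.J) × Fin (S.n j))

variable (S : StarSetting)

noncomputable def Δ (j : Fin S.J) (k : Fin (S.n j)) : ℝ := S.b j k - S.bl j k

noncomputable def Δmax (j : Fin S.J) : ℝ :=
  Finset.univ.sup' ⟨⟨0, S.hn j⟩, Finset.mem_univ _⟩ (S.Δ j)

noncomputable def v0 : ℝ :=
  max S.bl0 (Finset.univ.sup' ⟨⟨0, S.hJ⟩, Finset.mem_univ _⟩
    fun j => S.C j - ∑ k, S.b j k)

noncomputable def η (j : Fin S.J) : ℝ := S.v0 + (∑ k, S.b j k) - S.C j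

/-- The Vikrey price vector `v_θ`. -/
noncomputable def vick (θ : ℝ) : EuclideanSpace ℝ S.Idx :=
  WithLp.toLp 2 fun i => Option.elim i S.v0 fun jk => max (S.b jk.1 jk.2 - S.η jk.1 - θ) (S.bl jk.1 jk.2)

/-- The core region `K_θ`. -/
def coreK (θ : ℝ) : Set (EuclideanSpace ℝ S.Idx) :=
  { p | (∀ j, S.C j ≤ p none + ∑ k, p (some ⟨j, k⟩)) ∧
        (∀ j k, S.bl j k ≤ p (some ⟨j, k⟩) ∧ p (some ⟨j, k⟩) ≤ S.b j k) ∧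
        S.v0 ≤ p none ∧ p none ≤ S.v0 + θ }

/-- The expanded core region (IR constraint of buyer zero dropped). -/
def expandedK : Set (EuclideanSpace ℝ S.Idx) :=
  { p | (∀ j, S.C j ≤ p none + ∑ k, p (some ⟨j, k⟩)) ∧
        (∀ j k, S.bl j k ≤ p (some ⟨j, k⟩) ∧ p (some ⟨j, k⟩) ≤ S.b j k) ∧
        S.v0 ≤ p none }

/-- The KKT conditions at `θ` for the projection onto the expanded core. -/
def KKT (θ : ℝ) (p : EuclideanSpace ℝ S.Idx) (lam : Fin S.J → ℝ) : Prop :=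
  (∀ j, 0 ≤ lam j) ∧
  p none = S.v0 + ∑ j, lam j ∧
  (∀ j k, p (some ⟨j, k⟩) = min (S.vick θ (some ⟨j, k⟩) + lam j) (S.b j k)) ∧
  (∀ j, ∑ k, max (min (S.η j + θ) (S.Δ j k) - lam j) 0 ≤ (∑ i, lam i) + S.η j) ∧
  (∀ j, 0 < lam j → (∑ i, lam i) + S.η j = ∑ k, max (min (S.η j + θ) (S.Δ j k) - lam j) 0)

/-- The seller's revenue for a winner price vector. -/
noncomputable def revenue (p : EuclideanSpace ℝ S.Idx) : ℝ :=
  p none + ∑ j, ∑ k, p (some ⟨j, k⟩)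

/-- The minimum revenue core at `θ`. -/
def MRC (θ : ℝ) : Set (EuclideanSpace ℝ S.Idx) :=
  { p | p ∈ S.coreK θ ∧ ∀ q ∈ S.coreK θ, S.revenue p ≤ S.revenue q }

end StarSetting

/-- `q` is a point of `A` nearest to `v` (Euclidean projection of `v` onto `A`). -/
def IsProjOn {E : Type*} [NormedAddCommGroup E] (A : Set E) (v q : E) : Prop :=
  q ∈ A ∧ ∀ r ∈ A, dist v q ≤ dist v r

/-- `f` is piecewise linear on `[0, ∞)`: there are finitely many breakpoints
`0 = t 0 < t 1 < ⋯ < t m` such that `f` is affine on each `[t i, t (i+1)]` and on `[t m, ∞)`. -/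
def PiecewiseLinearOnIci (f : ℝ → ℝ) : Prop :=
  ∃ m : ℕ, ∃ t : Fin (m + 1) → ℝ, t 0 = 0 ∧ StrictMono t ∧
    (∀ i : Fin m, ∃ a c : ℝ, ∀ x ∈ Set.Icc (t i.castSucc) (t i.succ), f x = a * x + c) ∧
    (∃ a c : ℝ, ∀ x ∈ Set.Ici (t (Fin.last m)), f x = a * x + c)


/-!
Write `s = p none - v0` and `x j k = b j k - p (some ⟨j, k⟩)`. Projecting `vick θ` onto
`coreK θ` then means minimizing `s ^ 2 + ∑ (x j k - gap θ j k) ^ 2` over `0 ≤ s ≤ θ`,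
`0 ≤ x ≤ Δ`, `∑ k, x j k ≤ η j + s`, where `gap θ j k = min (η j + θ) (Δ j k)`. For fixed
`s` each arm is solved by water filling, `x j k = max (gap θ j k - λ j) 0`, and stationarity in
`s` asks for `s = min θ (∑ j, λ j)`; the resulting candidate is certified by the variational
inequality.

Each `λ j` is a maximum, over sets of items, of terms affine in `s`. So the largest `s` with
`s ≤ ∑ j, λ j` is a maximum, over choices of such sets, of affine combinations of the
`gap θ j k`; expanding each `gap` as a minimum makes it a max-min of finitely many affine
functions of `θ`, hence piecewise linear. For the slope
bound, let `s < θ` and raise `s` and `θ` by `δ`. Only the capped targets `gap θ j k = η j + θ`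
move, and an arm whose active set holds `u` of them has `λ j ≥ (1 - 1 / u) (η j + θ)` while
its level rises by at most `(1 - 1 / u) δ`. Hence `∑ j, λ j` rises by at most
`δ (∑ j, λ j) / θ ≤ δ`.
-/

open Set Finset

namespace PiecewiseLinearOnIci

variable {f g : ℝ → ℝ}

lemma congr (hf : PiecewiseLinearOnIci f) (hfg : EqOn f g (Ici 0)) : PiecewiseLinearOnIci g := by
  obtain ⟨m, t, ht0, ht, hpieces, hlast⟩ := hf
  have hsub : ∀ i, Ici (t i) ⊆ Ici 0 := fun i =>
    Ici_subset_Ici.mpr (ht0 ▸ ht.monotone (Fin.zero_le i))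
  refine ⟨m, t, ht0, ht, fun i => ?_, ?_⟩
  · obtain ⟨a, c, h⟩ := hpieces i
    exact ⟨a, c, fun x hx => hfg (hsub _ hx.1) ▸ h x hx⟩
  · obtain ⟨a, c, h⟩ := hlast
    exact ⟨a, c, fun x hx => hfg (hsub _ hx) ▸ h x hx⟩

lemma const_add (hf : PiecewiseLinearOnIci f) (C : ℝ) :
    PiecewiseLinearOnIci fun x => C + f x := by
  obtain ⟨m, t, ht0, ht, hpieces, hlast⟩ := hf
  refine ⟨m, t, ht0, ht, fun i => ?_, ?_⟩
  · obtain ⟨a, c, h⟩ := hpieces i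
    exact ⟨a, C + c, fun x hx => by linarith [h x hx]⟩
  · obtain ⟨a, c, h⟩ := hlast
    exact ⟨a, C + c, fun x hx => by linarith [h x hx]⟩

/-- The breakpoints are the points of `{0} ∪ (X ∩ [0, ∞))` in increasing order. -/
lemma of_finset (X : Finset ℝ)
    (hf : ∀ I ⊆ Ici (0 : ℝ), (∀ z ∈ X, I ⊆ Ici z ∨ I ⊆ Iic z) →
      ∃ a c : ℝ, ∀ x ∈ I, f x = a * x + c) :
    PiecewiseLinearOnIci f := by
  classical
  set Y := insert 0 (X.filter (0 ≤ ·))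
  obtain ⟨m, hm⟩ : ∃ m, Y.card = m + 1 :=
    Nat.exists_eq_succ_of_ne_zero (card_ne_zero_of_mem (mem_insert_self 0 _))
  set t := Y.orderEmbOfFin hm
  have hY_nonneg : ∀ y ∈ Y, 0 ≤ y := by
    intro y hy
    rcases mem_insert.mp hy with rfl | hy
    exacts [le_rfl, (mem_filter.mp hy).2]
  have ht0 : t 0 = 0 := by
    rw [show (0 : Fin (m + 1)) = ⟨0, m.succ_pos⟩ from rfl, orderEmbOfFin_zero]
    exact le_antisymm (min'_le _ _ (mem_insert_self 0 _)) (le_min' _ _ _ hY_nonneg)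
  have ht_nonneg : ∀ i, 0 ≤ t i := fun i => ht0 ▸ t.monotone (Fin.zero_le i)
  have hX : ∀ z ∈ X, z < 0 ∨ ∃ l, t l = z := by
    intro z hz
    refine (lt_or_ge z 0).imp id fun h0 => ?_
    have : z ∈ Set.range t := by
      rw [range_orderEmbOfFin]
      exact mem_insert_of_mem (mem_filter.mpr ⟨hz, h0⟩)
    exact this
  refine ⟨m, t, ht0, t.strictMono, fun i => hf _ ?_ fun z hz => ?_, hf _ ?_ fun z hz => ?_⟩
  · exact fun x hx => (ht_nonneg _).trans hx.1
  · rcases hX z hz with hneg | ⟨l, rfl⟩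
    · exact .inl fun x hx => (hneg.le.trans (ht_nonneg _)).trans hx.1
    rcases le_or_gt l i.castSucc with hl | hl
    · exact .inl fun x hx => (t.monotone hl).trans hx.1
    · exact .inr fun x hx => hx.2.trans (t.monotone (Fin.castSucc_lt_iff_succ_le.mp hl))
  · exact fun x hx => (ht_nonneg _).trans hx
  · rcases hX z hz with hneg | ⟨l, rfl⟩
    · exact .inl fun x hx => (hneg.le.trans (ht_nonneg _)).trans hx
    · exact .inl fun x hx => (t.monotone (Fin.le_last l)).trans hx

end PiecewiseLinearOnIci

/-- `(c' - c) / (a - a')` is where the two lines cross; for equal slopes it is `0` (as `x / 0 = 0`)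
and any point would do. -/
lemma affine_le_or_ge_of_subset {a c a' c' : ℝ} {I : Set ℝ}
    (hI : I ⊆ Ici ((c' - c) / (a - a')) ∨ I ⊆ Iic ((c' - c) / (a - a'))) :
    (∀ x ∈ I, a * x + c ≤ a' * x + c') ∨ (∀ x ∈ I, a' * x + c' ≤ a * x + c) := by
  by_cases ha : a = a'
  · subst ha
    exact (le_total c c').imp (fun h x _ => by linarith) fun h x _ => by linarith
  have hdiff : ∀ x, a * x + c - (a' * x + c') = (a - a') * (x - (c' - c) / (a - a')) :=
    fun x => by field_simp [sub_ne_zero.mpr ha]; ring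
  rcases hI with hI | hI <;> rcases le_total a a' with h | h
  · exact .inl fun x hx => by nlinarith [hdiff x, mem_Ici.mp (hI hx)]
  · exact .inr fun x hx => by nlinarith [hdiff x, mem_Ici.mp (hI hx)]
  · exact .inr fun x hx => by nlinarith [hdiff x, mem_Iic.mp (hI hx)]
  · exact .inl fun x hx => by nlinarith [hdiff x, mem_Iic.mp (hI hx)]

def PairwiseComparableOn {α β ι : Type*} [LE β] (g : ι → α → β) (I : Set α) : Prop :=
  ∀ i j, (∀ x ∈ I, g i x ≤ g j x) ∨ (∀ x ∈ I, g j x ≤ g i x)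

lemma PairwiseComparableOn.isSublattice {α β ι : Type*} [LinearOrder β] {g : ι → α → β}
    {I : Set α} (hg : PairwiseComparableOn g I) : IsSublattice {F | ∃ i, EqOn F (g i) I} where
  supClosed := by
    rintro F ⟨i, hi⟩ G ⟨j, hj⟩
    rcases hg i j with h | h
    · exact ⟨j, fun x hx => by simp [hi hx, hj hx, h x hx]⟩
    · exact ⟨i, fun x hx => by simp [hi hx, hj hx, h x hx]⟩
  infClosed := by
    rintro F ⟨i, hi⟩ G ⟨j, hj⟩
    rcases hg i j with h | h
    · exact ⟨i, fun x hx => by simp [hi hx, hj hx, h x hx]⟩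
    · exact ⟨j, fun x hx => by simp [hi hx, hj hx, h x hx]⟩

lemma PiecewiseLinearOnIci.of_eqOn_affine {ι : Type*} [Finite ι] {F : ℝ → ℝ}
    (a c : ι → ℝ)
    (hF : ∀ I ⊆ Ici (0 : ℝ), PairwiseComparableOn (fun i x => a i * x + c i) I →
      ∃ i, EqOn F (fun x => a i * x + c i) I) :
    PiecewiseLinearOnIci F := by
  classical
  have := Fintype.ofFinite ι
  refine of_finset (univ.image fun ij : ι × ι => (c ij.2 - c ij.1) / (a ij.1 - a ij.2))
    fun I hI hX => ?_
  obtain ⟨i, hi⟩ := hF I hI fun i j =>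
    affine_le_or_ge_of_subset (hX _ (mem_image_of_mem _ (mem_univ (i, j))))
  exact ⟨a i, c i, fun x hx => hi hx⟩

lemma sum_sup'_eq_sup'_sum {α ι : Type*} [AddCommMonoid α] [LinearOrder α]
    [IsOrderedAddMonoid α] [Fintype ι] [DecidableEq ι] {κ : ι → Type*}
    [∀ i, Fintype (κ i)] [∀ i, Nonempty (κ i)] (f : ∀ i, κ i → α) :
    ∑ i, univ.sup' univ_nonempty (f i)
      = univ.sup' univ_nonempty fun γ : ∀ i, κ i => ∑ i, f i (γ i) := by
  refine le_antisymm ?_ (sup'_le _ _ fun γ _ => sum_le_sum fun i _ => le_sup' (f i) (mem_univ _))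
  choose γ _ hγ using fun i => exists_mem_eq_sup' univ_nonempty (f i)
  simp only [hγ]
  exact le_sup' (fun γ : ∀ i, κ i => ∑ i, f i (γ i)) (mem_univ γ)

lemma sum_le_sum_add_card_filter_mul {ι : Type*} {T : Finset ι} {d d' : ι → ℝ} {δ : ℝ}
    [DecidablePred fun k => d k < d' k] (hd' : ∀ k ∈ T, d' k ≤ d k + δ) :
    ∑ k ∈ T, d' k ≤ ∑ k ∈ T, d k + (T.filter fun k => d k < d' k).card * δ := by
  have : ∑ k ∈ T, (d' k - d k) ≤ ∑ k ∈ T, if d k < d' k then δ else 0 :=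
    sum_le_sum fun k hk => by
      split_ifs with h
      · linarith [hd' k hk]
      · linarith [not_lt.mp h]
  rw [sum_ite, sum_const, sum_const_zero, nsmul_eq_mul, add_zero, sum_sub_distrib] at this
  linarith

lemma IsProjOn.eq_of_inner_le {E : Type*} [NormedAddCommGroup E] [InnerProductSpace ℝ E]
    {K : Set E} {v q p : E} (hq : IsProjOn K v q) (hp : p ∈ K)
    (hvi : ∀ r ∈ K, inner ℝ (v - p) (r - p) ≤ 0) : q = p := by
  have hqp : ‖v - q‖ ≤ ‖v - p‖ := by simpa only [dist_eq_norm] using hq.2 p hp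
  have hexp :
      ‖v - q‖ ^ 2 = ‖v - p‖ ^ 2 - 2 * inner ℝ (v - p) (q - p) + ‖q - p‖ ^ 2 := by
    rw [← norm_sub_sq_real, sub_sub_sub_cancel_right]
  have : ‖q - p‖ ^ 2 ≤ 0 := by
    nlinarith [hvi q hq.1, norm_nonneg (v - q), norm_nonneg (v - p)]
  exact sub_eq_zero.mp (norm_eq_zero.mp (pow_eq_zero_iff two_ne_zero |>.mp
    (le_antisymm this (sq_nonneg _))))

section WaterLevel

variable {ι : Type*} [Fintype ι]

/-- For `c ≥ 0`, `k ↦ max (d k - waterLevel d c) 0` is the nearest point to `d` in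
`{x ≥ 0 | ∑ k, x k ≤ c}`. The empty set contributes `(0 - c) / 0 = 0`, which makes the level
nonnegative. -/
noncomputable def waterLevel (d : ι → ℝ) (c : ℝ) : ℝ :=
  univ.sup' univ_nonempty fun T : Finset ι => (∑ k ∈ T, d k - c) / T.card

variable {d : ι → ℝ} {c : ℝ}

lemma le_waterLevel (d : ι → ℝ) (c : ℝ) (T : Finset ι) :
    (∑ k ∈ T, d k - c) / T.card ≤ waterLevel d c :=
  le_sup' (fun T : Finset ι => (∑ k ∈ T, d k - c) / T.card) (mem_univ T)

lemma waterLevel_nonneg (d : ι → ℝ) (c : ℝ) : 0 ≤ waterLevel d c := by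
  simpa using le_waterLevel d c ∅

lemma sum_sub_le_card_mul_waterLevel (d : ι → ℝ) (hc : 0 ≤ c) (T : Finset ι) :
    ∑ k ∈ T, d k - c ≤ T.card * waterLevel d c := by
  rcases T.eq_empty_or_nonempty with rfl | hT
  · simpa using hc
  rw [← div_le_iff₀' (by exact_mod_cast hT.card_pos)]
  exact le_waterLevel d c T

lemma exists_card_mul_waterLevel_eq (h : 0 < waterLevel d c) :
    ∃ T : Finset ι, T.Nonempty ∧ T.card * waterLevel d c = ∑ k ∈ T, d k - c := by
  obtain ⟨T, -, hT⟩ := exists_mem_eq_sup' univ_nonempty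
    fun T : Finset ι => (∑ k ∈ T, d k - c) / T.card
  have hne : T.Nonempty := by
    rw [Finset.nonempty_iff_ne_empty]
    rintro rfl
    simp [waterLevel, hT] at h
  refine ⟨T, hne, ?_⟩
  rw [waterLevel, hT, mul_div_cancel₀ _ (by exact_mod_cast hne.card_pos.ne')]

lemma sum_max_sub_waterLevel_le (hc : 0 ≤ c) :
    ∑ k, max (d k - waterLevel d c) 0 ≤ c := by
  classical
  set L := waterLevel d c
  set U := univ.filter fun k => L < d k
  have hsplit : ∑ k, max (d k - L) 0 = ∑ k ∈ U, d k - U.card * L := by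
    rw [← nsmul_eq_mul, ← sum_const, ← sum_sub_distrib, sum_filter]
    refine sum_congr rfl fun k _ => ?_
    split_ifs with h
    · exact max_eq_left (by linarith)
    · exact max_eq_right (by linarith)
  linarith [sum_sub_le_card_mul_waterLevel d hc U]

lemma sum_sub_le_sum_max_sub (d : ι → ℝ) (L : ℝ) (T : Finset ι) :
    ∑ k ∈ T, (d k - L) ≤ ∑ k, max (d k - L) 0 :=
  (sum_le_sum fun _ _ => le_max_left _ _).trans
    (sum_le_sum_of_subset_of_nonneg (subset_univ T) fun _ _ _ => le_max_right _ _)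

lemma sum_max_sub_waterLevel_eq (hc : 0 ≤ c) (h : 0 < waterLevel d c) :
    ∑ k, max (d k - waterLevel d c) 0 = c := by
  refine le_antisymm (sum_max_sub_waterLevel_le hc) ?_
  obtain ⟨T, -, hT⟩ := exists_card_mul_waterLevel_eq h
  calc c = ∑ k ∈ T, (d k - waterLevel d c) := by
        rw [sum_sub_distrib, sum_const, nsmul_eq_mul]; linarith
    _ ≤ _ := sum_sub_le_sum_max_sub d _ T

/-- The variational inequality of the water-filling projection, tested against a `y ≥ 0`
whose total may exceed the budget. -/
lemma sum_mul_sub_le_waterLevel_mul (hc : 0 ≤ c) {y : ι → ℝ} (hy : 0 ≤ y) :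
    ∑ k, (d k - max (d k - waterLevel d c) 0) * (y k - max (d k - waterLevel d c) 0)
      ≤ waterLevel d c * (∑ k, y k - c) := by
  set L := waterLevel d c
  have hpoint : ∀ k, (d k - max (d k - L) 0) * (y k - max (d k - L) 0)
      ≤ L * (y k - max (d k - L) 0) := by
    intro k
    rcases le_total (d k) L with h | h
    · rw [max_eq_right (by linarith)]
      simpa using mul_le_mul_of_nonneg_right h (hy k)
    · rw [max_eq_left (by linarith), sub_sub_cancel]
  calc _ ≤ ∑ k, L * (y k - max (d k - L) 0) := sum_le_sum fun k _ => hpoint k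
    _ = L * (∑ k, y k - ∑ k, max (d k - L) 0) := by rw [← mul_sum, sum_sub_distrib]
    _ ≤ L * (∑ k, y k - c) := by
        rcases (waterLevel_nonneg d c).eq_or_lt with h0 | hpos
        · simp [L, ← h0]
        · rw [sum_max_sub_waterLevel_eq hc hpos]

lemma mul_waterLevel_sub_le {d' : ι → ℝ} {δ m : ℝ} (hc : 0 ≤ c) (hcm : c ≤ m)
    (hδ : 0 ≤ δ) (hd' : ∀ k, d' k ≤ d k + δ) (hmoved : ∀ k, d k < d' k → d k = m) :
    m * (waterLevel d' (c + δ) - waterLevel d c) ≤ δ * waterLevel d c := by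
  classical
  set L := waterLevel d c
  set L' := waterLevel d' (c + δ)
  have hL : 0 ≤ L := waterLevel_nonneg d c
  rcases le_or_gt L' L with hle | hlt
  · nlinarith
  obtain ⟨T, hT, hTL'⟩ := exists_card_mul_waterLevel_eq (hL.trans_lt hlt)
  set U := T.filter fun k => d k < d' k
  have hTL := sum_sub_le_card_mul_waterLevel d hc T
  have hsum := sum_le_sum_add_card_filter_mul (T := T) fun k _ => hd' k
  have hU : U.card * (m - L) ≤ c := by
    have := (sum_sub_le_sum_max_sub d L U).trans (sum_max_sub_waterLevel_le hc)
    rwa [sum_congr rfl fun k hk => by rw [hmoved k (mem_filter.mp hk).2], sum_const,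
      nsmul_eq_mul] at this
  have hUT : (U.card : ℝ) ≤ T.card := by exact_mod_cast card_filter_le T _
  have hTpos : (0 : ℝ) < T.card := by exact_mod_cast hT.card_pos
  have h1 : T.card * (L' - L) ≤ (U.card - 1) * δ := by linarith
  have h2 : (U.card - 1) * m ≤ U.card * L := by linarith
  refine le_of_mul_le_mul_left ?_ hTpos
  calc T.card * (m * (L' - L)) = m * (T.card * (L' - L)) := by ring
    _ ≤ m * ((U.card - 1) * δ) := mul_le_mul_of_nonneg_left h1 (hc.trans hcm)
    _ = δ * ((U.card - 1) * m) := by ring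
    _ ≤ δ * (U.card * L) := mul_le_mul_of_nonneg_left h2 hδ
    _ ≤ δ * (T.card * L) := by gcongr
    _ = T.card * (δ * L) := by ring

end WaterLevel

namespace StarSetting

variable (S : StarSetting) {s θ δ : ℝ}

lemma η_nonneg (j : Fin S.J) : 0 ≤ S.η j := by
  have : S.C j - ∑ k, S.b j k ≤ S.v0 :=
    (le_sup' (fun j => S.C j - ∑ k, S.b j k) (mem_univ j)).trans (le_max_right _ _)
  simp only [η]
  linarith

noncomputable def gap (θ : ℝ) (j : Fin S.J) (k : Fin (S.n j)) : ℝ :=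
  min (S.η j + θ) (S.Δ j k)

lemma vick_none (θ : ℝ) : S.vick θ none = S.v0 := rfl

lemma vick_some (θ : ℝ) (j : Fin S.J) (k : Fin (S.n j)) :
    S.vick θ (some ⟨j, k⟩) = S.b j k - S.gap θ j k := by
  change max (S.b j k - S.η j - θ) (S.bl j k) = S.b j k - min (S.η j + θ) (S.b j k - S.bl j k)
  rcases le_total (S.η j + θ) (S.b j k - S.bl j k) with h | h
  · rw [min_eq_left h, max_eq_left (by linarith)]; ring
  · rw [min_eq_right h, max_eq_right (by linarith)]; ring

lemma gap_le_Δ (θ : ℝ) (j : Fin S.J) (k : Fin (S.n j)) : S.gap θ j k ≤ S.Δ j k :=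
  min_le_right _ _

lemma gap_add_le (θ : ℝ) (hδ : 0 ≤ δ) (j : Fin S.J) (k : Fin (S.n j)) :
    S.gap (θ + δ) j k ≤ S.gap θ j k + δ := by
  rw [gap, gap, ← add_assoc, ← min_add_add_right]
  exact min_le_min le_rfl (by linarith)

lemma gap_eq_of_lt_gap_add {j : Fin S.J} {k : Fin (S.n j)}
    (h : S.gap θ j k < S.gap (θ + δ) j k) : S.gap θ j k = S.η j + θ := by
  rcases le_total (S.η j + θ) (S.Δ j k) with hle | hle
  · exact min_eq_left hle
  · have : S.gap θ j k = S.Δ j k := min_eq_right hle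
    linarith [S.gap_le_Δ (θ + δ) j k]

/-- The multiplier of the constraint `C j ≤ p none + ∑ k, p (some ⟨j, k⟩)` when buyer zero
pays `v0 + s`. -/
noncomputable def level (s θ : ℝ) (j : Fin S.J) : ℝ := waterLevel (S.gap θ j) (S.η j + s)

noncomputable def totalLevel (s θ : ℝ) : ℝ := ∑ j, S.level s θ j

/-- On each arm, one of the sets over which `waterLevel` maximizes. -/
abbrev ArmSets := ∀ j : Fin S.J, Finset (Fin (S.n j))

/-- The value of `s` at which the water levels, computed with the sets `γ`, add up to `s`. -/
noncomputable def crit (γ : S.ArmSets) (θ : ℝ) : ℝ :=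
  (∑ j, (∑ k ∈ γ j, S.gap θ j k - S.η j) / (γ j).card) /
    (1 + ∑ j, ((γ j).card : ℝ)⁻¹)

noncomputable def fixedPt (θ : ℝ) : ℝ :=
  univ.sup' univ_nonempty fun γ : S.ArmSets => S.crit γ θ

lemma one_add_sum_inv_card_pos (γ : S.ArmSets) : 0 < 1 + ∑ j, ((γ j).card : ℝ)⁻¹ := by
  positivity

lemma sum_level_terms_eq (γ : S.ArmSets) (s θ : ℝ) :
    ∑ j, (∑ k ∈ γ j, S.gap θ j k - (S.η j + s)) / (γ j).card
      = s + (1 + ∑ j, ((γ j).card : ℝ)⁻¹) * (S.crit γ θ - s) := by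
  rw [crit, mul_sub, mul_div_cancel₀ _ (S.one_add_sum_inv_card_pos γ).ne']
  simp only [← sub_sub, sub_div _ s, sum_sub_distrib, div_eq_mul_inv s, ← mul_sum]
  ring

lemma totalLevel_eq_sup' (s θ : ℝ) :
    S.totalLevel s θ = univ.sup' univ_nonempty fun γ : S.ArmSets =>
      ∑ j, (∑ k ∈ γ j, S.gap θ j k - (S.η j + s)) / (γ j).card :=
  sum_sup'_eq_sup'_sum _

lemma totalLevel_le_iff : S.totalLevel s θ ≤ s ↔ S.fixedPt θ ≤ s := by
  simp only [totalLevel_eq_sup', fixedPt, sup'_le_iff, sum_level_terms_eq, add_le_iff_nonpos_right,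
    ← smul_eq_mul, smul_nonpos_iff_nonpos_of_pos_left (S.one_add_sum_inv_card_pos _), sub_nonpos]

lemma le_totalLevel_iff : s ≤ S.totalLevel s θ ↔ s ≤ S.fixedPt θ := by
  simp only [totalLevel_eq_sup', fixedPt, le_sup'_iff, sum_level_terms_eq, le_add_iff_nonneg_right,
    mul_nonneg_iff_of_pos_left (S.one_add_sum_inv_card_pos _), sub_nonneg]

lemma fixedPt_nonneg (θ : ℝ) : 0 ≤ S.fixedPt θ :=
  S.le_totalLevel_iff.mp (sum_nonneg fun _ _ => waterLevel_nonneg _ _)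

noncomputable def markup (θ : ℝ) : ℝ := min θ (S.fixedPt θ)

lemma markup_nonneg (hθ : 0 ≤ θ) : 0 ≤ S.markup θ := le_min hθ (S.fixedPt_nonneg θ)

lemma markup_le (θ : ℝ) : S.markup θ ≤ θ := min_le_left _ _

lemma totalLevel_sub_markup_mul_nonpos {y : ℝ} (hy : y ≤ θ) :
    (S.totalLevel (S.markup θ) θ - S.markup θ) * (y - S.markup θ) ≤ 0 := by
  have hle : S.markup θ ≤ S.totalLevel (S.markup θ) θ :=
    S.le_totalLevel_iff.mpr (min_le_right _ _)
  rcases (S.markup_le θ).eq_or_lt with heq | hlt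
  · exact mul_nonpos_of_nonneg_of_nonpos (sub_nonneg.mpr hle) (by linarith)
  · have hfix : S.markup θ = S.fixedPt θ :=
      min_eq_right ((min_lt_iff.mp hlt).resolve_left (lt_irrefl θ)).le
    have : S.totalLevel (S.markup θ) θ ≤ S.markup θ := S.totalLevel_le_iff.mpr hfix.ge
    rw [show S.totalLevel (S.markup θ) θ - S.markup θ = 0 by linarith, zero_mul]

/-- The projection of `vick θ` onto `coreK θ`. -/
noncomputable def proj (θ : ℝ) : EuclideanSpace ℝ S.Idx :=
  WithLp.toLp 2 fun i => Option.elim i (S.v0 + S.markup θ) fun jk =>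
    S.b jk.1 jk.2 - max (S.gap θ jk.1 jk.2 - S.level (S.markup θ) θ jk.1) 0

@[simp]
lemma proj_none (θ : ℝ) : S.proj θ none = S.v0 + S.markup θ := rfl

@[simp]
lemma proj_some (θ : ℝ) (j : Fin S.J) (k : Fin (S.n j)) :
    S.proj θ (some ⟨j, k⟩) = S.b j k - max (S.gap θ j k - S.level (S.markup θ) θ j) 0 := rfl

lemma proj_mem (hθ : 0 ≤ θ) : S.proj θ ∈ S.coreK θ := by
  have hs := S.markup_nonneg hθ
  refine ⟨fun j => ?_, fun j k => ⟨?_, ?_⟩, ?_, ?_⟩ <;> simp only [proj_none, proj_some]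
  · have := sum_max_sub_waterLevel_le (d := S.gap θ j) (add_nonneg (S.η_nonneg j) hs)
    rw [sum_sub_distrib]
    simp only [level, η] at this ⊢
    linarith
  · have hgap := S.gap_le_Δ θ j k
    have hlevel := waterLevel_nonneg (S.gap θ j) (S.η j + S.markup θ)
    have : max (S.gap θ j k - S.level (S.markup θ) θ j) 0 ≤ S.b j k - S.bl j k :=
      max_le (by simp only [level, Δ] at *; linarith) (sub_nonneg.mpr (S.h_bid j k))
    linarith
  · linarith [le_max_right (S.gap θ j k - S.level (S.markup θ) θ j) 0]
  · linarith
  · linarith [S.markup_le θ]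

lemma inner_vick_sub_proj_nonpos (hθ : 0 ≤ θ) {r : EuclideanSpace ℝ S.Idx}
    (hr : r ∈ S.coreK θ) : inner ℝ (S.vick θ - S.proj θ) (r - S.proj θ) ≤ 0 := by
  obtain ⟨hC, hbox, -, hr0⟩ := hr
  set s := S.markup θ with hs_def
  have hs := S.markup_nonneg hθ
  have harm : ∀ j, ∑ k, (S.gap θ j k - max (S.gap θ j k - S.level s θ j) 0) *
      ((S.b j k - r (some ⟨j, k⟩)) - max (S.gap θ j k - S.level s θ j) 0)
      ≤ S.level s θ j * (r none - S.v0 - s) := by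
    intro j
    refine (sum_mul_sub_le_waterLevel_mul (add_nonneg (S.η_nonneg j) hs)
      fun k => sub_nonneg.mpr (hbox j k).2).trans
        (mul_le_mul_of_nonneg_left ?_ (waterLevel_nonneg _ _))
    have := hC j
    simp only [sum_sub_distrib, η]
    linarith
  have hinner : inner ℝ (S.vick θ - S.proj θ) (r - S.proj θ) = -s * (r none - S.v0 - s) +
      ∑ j, ∑ k, (S.gap θ j k - max (S.gap θ j k - S.level s θ j) 0) *
        ((S.b j k - r (some ⟨j, k⟩)) - max (S.gap θ j k - S.level s θ j) 0) := by
    simp only [PiLp.inner_apply, PiLp.sub_apply, RCLike.inner_apply, conj_trivial,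
      Fintype.sum_option, Fintype.sum_sigma, vick_none, vick_some, proj_none, proj_some, ← hs_def]
    congr 1
    · ring
    · exact sum_congr rfl fun j _ => sum_congr rfl fun k _ => by ring
  calc _ ≤ -s * (r none - S.v0 - s) + ∑ j, S.level s θ j * (r none - S.v0 - s) :=
        hinner ▸ add_le_add_right (sum_le_sum fun j _ => harm j) _
    _ = (S.totalLevel s θ - s) * (r none - S.v0 - s) := by rw [totalLevel, ← sum_mul]; ring
    _ ≤ 0 := S.totalLevel_sub_markup_mul_nonpos (y := r none - S.v0) (by linarith)

lemma apply_none_of_isProjOn (hθ : 0 ≤ θ) {q : EuclideanSpace ℝ S.Idx}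
    (hq : IsProjOn (S.coreK θ) (S.vick θ) q) : q none = S.v0 + S.markup θ := by
  rw [hq.eq_of_inner_le (S.proj_mem hθ) fun r hr => S.inner_vick_sub_proj_nonpos hθ hr, proj_none]

lemma totalLevel_add_le (hδ : 0 ≤ δ) (hs : 0 ≤ s) (hsθ : s ≤ θ) (hθ : 0 < θ)
    (hfix : S.totalLevel s θ ≤ s) : S.totalLevel (s + δ) (θ + δ) ≤ s + δ := by
  have harm : ∀ j,
      θ * (S.level (s + δ) (θ + δ) j - S.level s θ j) ≤ δ * S.level s θ j := by
    intro j
    have hη := S.η_nonneg j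
    have h := mul_waterLevel_sub_le (d := S.gap θ j) (d' := S.gap (θ + δ) j) (c := S.η j + s)
      (m := S.η j + θ)
      (by linarith) (by linarith) hδ (S.gap_add_le θ hδ j) fun k => S.gap_eq_of_lt_gap_add
    have hL := waterLevel_nonneg (S.gap θ j) (S.η j + s)
    simp only [level, ← add_assoc]
    rcases le_total (waterLevel (S.gap (θ + δ) j) (S.η j + s + δ))
      (waterLevel (S.gap θ j) (S.η j + s)) with hle | hle
    · nlinarith
    · nlinarith
  have hsum :
      θ * (S.totalLevel (s + δ) (θ + δ) - S.totalLevel s θ) ≤ δ * S.totalLevel s θ := by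
    simp only [totalLevel, ← sum_sub_distrib, mul_sum]
    exact sum_le_sum fun j _ => harm j
  have : S.totalLevel (s + δ) (θ + δ) - S.totalLevel s θ ≤ δ := by
    refine le_of_mul_le_mul_left ?_ hθ
    nlinarith
  linarith

lemma fixedPt_add_le (hδ : 0 ≤ δ) (h : S.fixedPt θ < θ) :
    S.fixedPt (θ + δ) ≤ S.fixedPt θ + δ :=
  S.totalLevel_le_iff.mp <| S.totalLevel_add_le hδ (S.fixedPt_nonneg θ) h.le
    ((S.fixedPt_nonneg θ).trans_lt h) (S.totalLevel_le_iff.mpr le_rfl)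

lemma markup_sub_le {θ θ' : ℝ} (h : θ ≤ θ') : S.markup θ' - S.markup θ ≤ θ' - θ := by
  have hθ' : S.markup θ' ≤ S.fixedPt θ' := min_le_right _ _
  rcases le_or_gt θ (S.fixedPt θ) with hle | hlt
  · have : S.markup θ = θ := min_eq_left hle
    linarith [S.markup_le θ']
  · have hfix : S.markup θ = S.fixedPt θ := min_eq_right hlt.le
    have := S.fixedPt_add_le (sub_nonneg.mpr h) hlt
    rw [add_sub_cancel] at this
    linarith

/-- `crit` with each `gap θ j k = min (η j + θ) (Δ j k)` replaced by the term chosen by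
`σ j k`. -/
noncomputable def critAtom (γ : S.ArmSets) (σ : ∀ j, Fin (S.n j) → Bool) (θ : ℝ) : ℝ :=
  (∑ j, (∑ k ∈ γ j, (if σ j k then S.η j + θ else S.Δ j k) - S.η j) / (γ j).card) /
    (1 + ∑ j, ((γ j).card : ℝ)⁻¹)

lemma critAtom_affine (γ : S.ArmSets) (σ : ∀ j, Fin (S.n j) → Bool) :
    ∃ a c : ℝ, ∀ θ, S.critAtom γ σ θ = a * θ + c := by
  refine ⟨(∑ j, ((γ j).filter (σ j ·)).card / ((γ j).card : ℝ)) /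
    (1 + ∑ j, ((γ j).card : ℝ)⁻¹), S.critAtom γ σ 0, fun θ => ?_⟩
  have hsplit : ∀ j θ, ∑ k ∈ γ j, (if σ j k then S.η j + θ else S.Δ j k)
      = ∑ k ∈ γ j, (if σ j k then S.η j else S.Δ j k)
        + ((γ j).filter (σ j ·)).card * θ := by
    intro j θ
    have : ∀ k, (if σ j k then S.η j + θ else S.Δ j k)
        = (if σ j k then S.η j else S.Δ j k) + (if σ j k then 1 else 0) * θ := fun k => by
      split_ifs <;> ring
    rw [sum_congr rfl fun k _ => this k, sum_add_distrib, ← sum_mul, sum_boole]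
  simp only [critAtom, hsplit, add_zero, add_sub_right_comm, add_div, sum_add_distrib,
    mul_div_right_comm _ θ, ← sum_mul]
  ring

lemma crit_eq_inf' (γ : S.ArmSets) (θ : ℝ) :
    S.crit γ θ = univ.inf' univ_nonempty fun σ => S.critAtom γ σ θ := by
  refine le_antisymm (le_inf' _ _ fun σ _ => ?_)
    ((inf'_le _ (mem_univ fun j k => decide (S.η j + θ ≤ S.Δ j k))).trans_eq ?_)
  · unfold crit critAtom
    gcongr with j _ k _
    split_ifs
    exacts [min_le_left _ _, min_le_right _ _]
  · simp only [crit, critAtom, gap, min_def, decide_eq_true_eq]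

lemma piecewiseLinearOnIci_markup : PiecewiseLinearOnIci S.markup := by
  choose a c hac using S.critAtom_affine
  refine .of_eqOn_affine (ι := Option (S.ArmSets × ∀ j, Fin (S.n j) → Bool))
    (fun i => i.elim 1 fun γσ => a γσ.1 γσ.2) (fun i => i.elim 0 fun γσ => c γσ.1 γσ.2)
    fun I _ hI => ?_
  have hmarkup : S.markup = id ⊓ univ.sup' univ_nonempty fun γ =>
      univ.inf' univ_nonempty fun σ => S.critAtom γ σ := by
    ext θ
    simp [markup, fixedPt, crit_eq_inf', Finset.sup'_apply, Finset.inf'_apply]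
  rw [hmarkup]
  have hlat := hI.isSublattice
  exact hlat.infClosed ⟨none, fun x _ => by simp⟩ (hlat.supClosed.finsetSup'_mem _ fun γ _ =>
    hlat.infClosed.finsetInf'_mem _ fun σ _ => ⟨some (γ, σ), fun x _ => by simp [hac]⟩)

end StarSetting

/-- in the star network setting, the quadratic-rule price of buyer zero,
`θ ↦ p_{0,θ}`, is piecewise linear on `[0,∞)` and increases at rate at most one. -/
theorem quadratic_price_slope_le_one (S : StarSetting)
    (p : ℝ → EuclideanSpace ℝ S.Idx)
    (hp : ∀ θ : ℝ, 0 ≤ θ → IsProjOn (S.coreK θ) (S.vick θ) (p θ)) :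
    PiecewiseLinearOnIci (fun θ => p θ none) ∧
    ∀ θ θ' : ℝ, 0 ≤ θ → θ ≤ θ' → p θ' none - p θ none ≤ θ' - θ := by
  have hp0 : ∀ θ, 0 ≤ θ → p θ none = S.v0 + S.markup θ := fun θ hθ =>
    S.apply_none_of_isProjOn hθ (hp θ hθ)
  refine ⟨(S.piecewiseLinearOnIci_markup.const_add S.v0).congr fun θ hθ => (hp0 θ hθ).symm,
    fun θ θ' hθ hθθ' => ?_⟩
  rw [hp0 θ hθ, hp0 θ' (hθ.trans hθθ')]
  linarith [S.markup_sub_le hθθ']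
end

section
/- In the star network setting, for every θ ≥ 0 the buyer-zero coordinate of the projection of the Vikrey vector onto the core equals the minimum of buyer zero's bid and the buyer-zero coordinate of the projection onto the expanded core: p_{0,θ} = min{ v_0 + θ, p̃_{0,θ} }. -/
/-!
The core is the expanded core cut by the half-space `p none ≤ v₀ + θ`. If the projection `p̃_θ`
onto the expanded core lies in that half-space, it is also the projection onto the smaller core.
Otherwise the projection `p_θ` onto the core must lie on the cutting hyperplane: if it lay strictly
inside the half-space, it would be a local, hence (the distance to `v_θ` being convex) a global
minimiser of the distance over the expanded core, i.e. `p_θ = p̃_θ`, which is not in the half-space.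
Both cases use that nearest points in convex sets of an inner product space are unique.
-/

open scoped RealInnerProductSpace Topology

namespace IsProjOn

section NormedAddCommGroup

variable {E : Type*} [NormedAddCommGroup E] {A B U : Set E} {v q : E}

theorem mono (h : IsProjOn A v q) (hBA : B ⊆ A) (hq : q ∈ B) : IsProjOn B v q :=
  ⟨hq, fun r hr => h.2 r (hBA hr)⟩

theorem of_inter_mem_nhds [NormedSpace ℝ E] (hA : Convex ℝ A) (hU : U ∈ 𝓝 q)
    (h : IsProjOn (A ∩ U) v q) : IsProjOn A v q := by
  have hlocal : IsLocalMinOn (dist v) A q :=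
    Filter.mem_of_superset (inter_mem_nhdsWithin A hU) fun r hr => h.2 r hr
  have hconv : ConvexOn ℝ A (dist v) := by
    simpa only [dist_comm] using convexOn_dist v hA
  exact ⟨h.1.1, isMinOn_iff.1 (IsMinOn.of_isLocalMinOn_of_convexOn h.1.1 hlocal hconv)⟩

end NormedAddCommGroup

section InnerProductSpace

variable {E : Type*} [NormedAddCommGroup E] [InnerProductSpace ℝ E] {A : Set E} {v q q' : E}

theorem inner_sub_nonpos (hA : Convex ℝ A) (h : IsProjOn A v q) {r : E} (hr : r ∈ A) :
    ⟪v - q, r - q⟫ ≤ 0 := by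
  refine (norm_eq_iInf_iff_real_inner_le_zero hA h.1).1 ?_ r hr
  have : Nonempty A := ⟨⟨q, h.1⟩⟩
  have hbdd : BddBelow (Set.range fun w : A => ‖v - w‖) :=
    ⟨0, Set.forall_mem_range.2 fun _ => norm_nonneg _⟩
  refine le_antisymm (le_ciInf fun w => ?_) (ciInf_le hbdd ⟨q, h.1⟩)
  simpa only [dist_eq_norm] using h.2 w w.2

theorem unique (hA : Convex ℝ A) (h : IsProjOn A v q) (h' : IsProjOn A v q') : q = q' := by
  have hsum : ⟪v - q, q' - q⟫ + ⟪v - q', q - q'⟫ = ⟪q' - q, q' - q⟫ := by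
    rw [← neg_sub q' q, inner_neg_right, ← sub_eq_add_neg, ← inner_sub_left, sub_sub_sub_cancel_left]
  have hnonpos : ⟪q' - q, q' - q⟫ ≤ 0 := by
    linarith [h.inner_sub_nonpos hA h'.1, h'.inner_sub_nonpos hA h.1]
  exact (sub_eq_zero.1 (real_inner_self_nonpos.1 hnonpos)).symm

end InnerProductSpace

end IsProjOn

namespace StarSetting

variable (S : StarSetting)

theorem convex_expandedK : Convex ℝ S.expandedK := by
  rintro x ⟨hxC, hxb, hx0⟩ y ⟨hyC, hyb, hy0⟩ a b ha hb hab
  have hcoord : ∀ i, (a • x + b • y) i = a * x i + b * y i := fun _ => rfl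
  have hsum : ∀ j, ∑ k, (a • x + b • y) (some ⟨j, k⟩)
      = a * ∑ k, x (some ⟨j, k⟩) + b * ∑ k, y (some ⟨j, k⟩) := by
    intro j
    simp only [hcoord, Finset.sum_add_distrib, Finset.mul_sum]
  have hle_comb : ∀ {c s t : ℝ}, c ≤ s → c ≤ t → c ≤ a * s + b * t := fun {c s t} hs ht =>
    calc c = a * c + b * c := by rw [← add_mul, hab, one_mul]
      _ ≤ a * s + b * t := by gcongr
  have hcomb_le : ∀ {c s t : ℝ}, s ≤ c → t ≤ c → a * s + b * t ≤ c := fun {c s t} hs ht =>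
    calc a * s + b * t ≤ a * c + b * c := by gcongr
      _ = c := by rw [← add_mul, hab, one_mul]
  refine ⟨fun j => ?_, fun j k => ?_, ?_⟩
  · rw [hsum, hcoord]
    linarith [hle_comb (hxC j) (hyC j)]
  · rw [hcoord]
    exact ⟨hle_comb (hxb j k).1 (hyb j k).1, hcomb_le (hxb j k).2 (hyb j k).2⟩
  · rw [hcoord]
    exact hle_comb hx0 hy0

theorem coreK_eq_inter (θ : ℝ) :
    S.coreK θ = S.expandedK ∩ {x | x none ≤ S.v0 + θ} := by
  ext x
  simp only [coreK, expandedK, Set.mem_inter_iff, Set.mem_ofPred_eq, and_assoc]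

theorem coreK_subset_expandedK (θ : ℝ) : S.coreK θ ⊆ S.expandedK :=
  S.coreK_eq_inter θ ▸ Set.inter_subset_left

theorem convex_coreK (θ : ℝ) : Convex ℝ (S.coreK θ) := by
  rw [coreK_eq_inter]
  exact S.convex_expandedK.inter
    (convex_halfSpace_le { map_add := fun _ _ => rfl, map_smul := fun _ _ => rfl } _)

end StarSetting

theorem core_proj_eq_min_expanded_general (S : StarSetting) (θ : ℝ)
    (p pe : EuclideanSpace ℝ S.Idx)
    (hp : IsProjOn (S.coreK θ) (S.vick θ) p)
    (hpe : IsProjOn S.expandedK (S.vick θ) pe) :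
    p none = min (S.v0 + θ) (pe none) := by
  rcases le_or_gt (pe none) (S.v0 + θ) with hle | hlt
  · have hpe_core : IsProjOn (S.coreK θ) (S.vick θ) pe :=
      hpe.mono (S.coreK_subset_expandedK θ) (S.coreK_eq_inter θ ▸ ⟨hpe.1, hle⟩)
    rw [min_eq_right hle, hp.unique (S.convex_coreK θ) hpe_core]
  · rw [min_eq_left hlt.le]
    rw [S.coreK_eq_inter] at hp
    refine le_antisymm hp.1.2 (not_lt.1 fun hp_lt => hlt.not_ge ?_)
    have hnhds : {x : EuclideanSpace ℝ S.Idx | x none ≤ S.v0 + θ} ∈ 𝓝 p :=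
      ((continuous_apply none).comp (PiLp.continuous_ofLp 2 _)).continuousAt.eventually
        (eventually_le_nhds hp_lt)
    rw [hpe.unique S.convex_expandedK (hp.of_inter_mem_nhds S.convex_expandedK hnhds)]
    exact hp.1.2

/-- `p_{0,θ} = min { v_0 + θ, p̃_{0,θ} }`, where `p_θ` is the projection of
the Vikrey vector onto the core and `p̃_θ` its projection onto the expanded core. -/
theorem core_proj_eq_min_expanded (S : StarSetting) (θ : ℝ) (hθ : 0 ≤ θ)
    (p pe : EuclideanSpace ℝ S.Idx)
    (hp : IsProjOn (S.coreK θ) (S.vick θ) p)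
    (hpe : IsProjOn S.expandedK (S.vick θ) pe) :
    p none = min (S.v0 + θ) (pe none) :=
  core_proj_eq_min_expanded_general S θ p pe hp hpe
end

section
/- Let J be a finite index set and θ > 0 a real number. For each j ∈ J let η_j ≥ 0 and λ_j ≥ 0 be reals with λ_j < η_j + θ, and let Δ_{j,1},…,Δ_{j,n_j} be reals. Set σ := Σ_{j∈J} λ_j, m_j := #{k : Δ_{j,k} > η_j + θ} and N_j := #{k : Δ_{j,k} > λ_j}, and assume N_j ≥ 1 for every j. If σ ≤ θ and for every j ∈ J, Σ_{k=1}^{n_j} max{ min{η_j + θ, Δ_{j,k}} − λ_j, 0 } ≤ σ + η_j, then Σ_{j∈J} m_j / N_j ≤ 1 + Σ_{j∈J} 1 / N_j. -/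
/-!
An index `k` with `Δ_{j,k} > η_j + θ` contributes the full amount `η_j + θ - λ_j` to the `j`-th
truncated sum, so `m_j (η_j + θ - λ_j) ≤ σ + η_j ≤ θ + η_j`. Rearranged, and using `m_j ≤ N_j`,
this reads `(m_j - 1) θ ≤ N_j λ_j`, i.e. `(m_j - 1) / N_j ≤ λ_j / θ`; summing over `j` and using
`σ ≤ θ` gives the estimate.
-/

open Finset

theorem Finset.card_filter_lt_mul_le_sum_max {α : Type*} (s : Finset α) (f : α → ℝ) (c l : ℝ) :
    ((s.filter fun k => c < f k).card : ℝ) * (c - l) ≤ ∑ k ∈ s, max (min c (f k) - l) 0 :=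
  calc ((s.filter fun k => c < f k).card : ℝ) * (c - l)
      = ∑ _k ∈ s.filter fun k => c < f k, (c - l) := by rw [sum_const, nsmul_eq_mul]
    _ ≤ ∑ k ∈ s.filter fun k => c < f k, max (min c (f k) - l) 0 := by
        refine sum_le_sum fun k hk => ?_
        rw [min_eq_left (mem_filter.1 hk).2.le]
        exact le_max_left _ _
    _ ≤ ∑ k ∈ s, max (min c (f k) - l) 0 :=
        sum_le_sum_of_subset_of_nonneg (filter_subset _ _) fun _ _ _ => le_max_right _ _

theorem sub_one_mul_le_of_mul_sub_le {m N η θ l : ℝ} (hm : 0 ≤ m) (hmN : m ≤ N) (hθ : 0 ≤ θ)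
    (hη : 0 ≤ η) (hl : 0 ≤ l) (h : m * (η + θ - l) ≤ θ + η) :
    (m - 1) * θ ≤ N * l := by
  rcases le_total m 1 with hm1 | hm1
  · nlinarith
  · nlinarith [mul_le_mul_of_nonneg_right hmN hl]

theorem card_filter_div_sub_one_div_le {α : Type*} [Fintype α] (f : α → ℝ) {η θ l : ℝ}
    (hθ : 0 < θ) (hη : 0 ≤ η) (hl : 0 ≤ l) (hlt : l < η + θ)
    (hsum : ∑ k, max (min (η + θ) (f k) - l) 0 ≤ θ + η) :
    ((univ.filter fun k => η + θ < f k).card : ℝ) / (univ.filter fun k => l < f k).card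
      - 1 / (univ.filter fun k => l < f k).card ≤ l / θ := by
  set m : ℝ := ((univ.filter fun k => η + θ < f k).card : ℝ)
  set N : ℝ := ((univ.filter fun k => l < f k).card : ℝ)
  have hmN : m ≤ N := by
    unfold m N
    gcongr
  have hmθ : (m - 1) * θ ≤ N * l :=
    sub_one_mul_le_of_mul_sub_le (Nat.cast_nonneg _) hmN hθ.le hη hl
      ((card_filter_lt_mul_le_sum_max univ f _ l).trans hsum)
  rw [div_sub_div_same]
  have hN : 0 ≤ N := Nat.cast_nonneg _
  rcases hN.eq_or_lt with hN | hN
  · -- `N = 0`: the left side is `(m - 1) / 0 = 0`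
    rw [← hN, div_zero]
    positivity
  · rw [div_le_div_iff₀ hN hθ]
    linarith

theorem counting_estimate_general {ι : Type*} [Fintype ι] (θ : ℝ) (hθ : 0 < θ)
    (n : ι → ℕ) (η lam : ι → ℝ) (Δ : (j : ι) → Fin (n j) → ℝ)
    (hη : ∀ j, 0 ≤ η j) (hlam : ∀ j, 0 ≤ lam j) (hlt : ∀ j, lam j < η j + θ)
    (hσ : ∑ j, lam j ≤ θ)
    (hsum : ∀ j, ∑ k, max (min (η j + θ) (Δ j k) - lam j) 0 ≤ (∑ i, lam i) + η j) :
    ∑ j, ((Finset.univ.filter fun k => η j + θ < Δ j k).card : ℝ) /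
        ((Finset.univ.filter fun k => lam j < Δ j k).card : ℝ)
      ≤ 1 + ∑ j, 1 / ((Finset.univ.filter fun k => lam j < Δ j k).card : ℝ) := by
  have hj : ∀ j, ((univ.filter fun k => η j + θ < Δ j k).card : ℝ) /
      (univ.filter fun k => lam j < Δ j k).card
      - 1 / (univ.filter fun k => lam j < Δ j k).card ≤ lam j / θ := fun j =>
    card_filter_div_sub_one_div_le (Δ j) hθ (hη j) (hlam j) (hlt j)
      ((hsum j).trans (by linarith))
  calc ∑ j, ((univ.filter fun k => η j + θ < Δ j k).card : ℝ) /
          (univ.filter fun k => lam j < Δ j k).card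
      = ∑ j, (((univ.filter fun k => η j + θ < Δ j k).card : ℝ) /
            (univ.filter fun k => lam j < Δ j k).card
            - 1 / (univ.filter fun k => lam j < Δ j k).card)
        + ∑ j, 1 / ((univ.filter fun k => lam j < Δ j k).card : ℝ) := by
        rw [← sum_add_distrib]
        simp only [sub_add_cancel]
    _ ≤ (∑ j, lam j) / θ + ∑ j, 1 / ((univ.filter fun k => lam j < Δ j k).card : ℝ) := by
        rw [sum_div]
        gcongr with j
        exact hj j
    _ ≤ 1 + ∑ j, 1 / ((univ.filter fun k => lam j < Δ j k).card : ℝ) := by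
        gcongr
        exact (div_le_one hθ).2 hσ

/-- the key counting estimate behind Lemma 3 of Abhishek–Hajek. With
`σ := Σ_j λ_j`, `m_j := #{k : Δ_{j,k} > η_j + θ}` and `N_j := #{k : Δ_{j,k} > λ_j}`,
if `σ ≤ θ` and `Σ_k max{min{η_j + θ, Δ_{j,k}} − λ_j, 0} ≤ σ + η_j` for all `j`, then
`Σ_j m_j / N_j ≤ 1 + Σ_j 1 / N_j`. -/
theorem counting_estimate {ι : Type*} [Fintype ι] (θ : ℝ) (hθ : 0 < θ)
    (n : ι → ℕ) (η lam : ι → ℝ) (Δ : (j : ι) → Fin (n j) → ℝ)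
    (hη : ∀ j, 0 ≤ η j) (hlam : ∀ j, 0 ≤ lam j) (hlt : ∀ j, lam j < η j + θ)
    (hN : ∀ j, 1 ≤ (Finset.univ.filter fun k => lam j < Δ j k).card)
    (hσ : ∑ j, lam j ≤ θ)
    (hsum : ∀ j, ∑ k, max (min (η j + θ) (Δ j k) - lam j) 0 ≤ (∑ i, lam i) + η j) :
    ∑ j, ((Finset.univ.filter fun k => η j + θ < Δ j k).card : ℝ) /
        ((Finset.univ.filter fun k => lam j < Δ j k).card : ℝ)
      ≤ 1 + ∑ j, 1 / ((Finset.univ.filter fun k => lam j < Δ j k).card : ℝ) :=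
  counting_estimate_general θ hθ n η lam Δ hη hlam hlt hσ hsum
end

section
/- Fix θ ≥ 0, η ≥ 0, and reals Δ_1,…,Δ_n, and define g(l) := Σ_{k=1}^n max{ min{η + θ, Δ_k} − l, 0 } for l ∈ ℝ. Then for every s ≥ 0 with s + η > 0 there exists a unique l ≥ 0 such that s + η ≥ g(l) and (l > 0 implies s + η = g(l)); moreover, denoting this unique solution by φ(s), the function φ is nonincreasing on {s ≥ 0 : s + η > 0}: if 0 ≤ s ≤ s' and s + η > 0, then φ(s') ≤ φ(s). -/
/-!
`g l = ∑ₖ max (cₖ - l) 0` is continuous, nonincreasing, strictly decreasing wherever it is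
positive, and vanishes for large `l`. The condition on `l` is the complementarity problem
`l ≥ 0`, `g l ≤ t`, `l (t - g l) = 0`: take `l = 0` if `g 0 ≤ t`, and otherwise solve
`g l = t` by the intermediate value theorem. If `t ≤ t'` and `l < l'` solved the problems for
`t` and `t'`, then `g l ≤ t ≤ t' = g l' ≤ g l` would force `g l = g l' > 0`, contradicting strict
decrease; with `t = t'` this is uniqueness.
-/

open Finset

def SolvesComplementarity (g : ℝ → ℝ) (t l : ℝ) : Prop :=
  0 ≤ l ∧ g l ≤ t ∧ (0 < l → t = g l)

section TruncatedSum

variable {ι : Type*} (s : Finset ι) (c : ι → ℝ)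

theorem antitone_sum_max_sub : Antitone fun l : ℝ => ∑ i ∈ s, max (c i - l) 0 :=
  fun _ _ hab => sum_le_sum fun _ _ => max_le_max (by linarith) le_rfl

theorem continuous_sum_max_sub : Continuous fun l : ℝ => ∑ i ∈ s, max (c i - l) 0 := by
  fun_prop

theorem sum_max_sub_eq_zero_of_le {m : ℝ} (h : ∀ i ∈ s, c i ≤ m) :
    ∑ i ∈ s, max (c i - m) 0 = 0 :=
  sum_eq_zero fun i hi => max_eq_right (sub_nonpos.mpr (h i hi))

theorem sum_max_sub_lt_of_pos {a b : ℝ} (hab : a < b) (hpos : 0 < ∑ i ∈ s, max (c i - a) 0) :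
    ∑ i ∈ s, max (c i - b) 0 < ∑ i ∈ s, max (c i - a) 0 := by
  obtain ⟨k, hk, hk_pos⟩ := exists_lt_of_sum_lt (sum_const_zero.trans_lt hpos)
  have hck : 0 < c k - a := by
    contrapose! hk_pos
    exact (max_eq_right hk_pos).le
  refine sum_lt_sum (fun i _ => max_le_max (by linarith) le_rfl) ⟨k, hk, ?_⟩
  exact (max_lt (by linarith) hck).trans_le (le_max_left _ _)

end TruncatedSum

section Complementarity

variable {g : ℝ → ℝ} {t t' l l' : ℝ}

theorem SolvesComplementarity.le_of_le (hg : Antitone g)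
    (hg_strict : ∀ ⦃a b⦄, a < b → 0 < g a → g b < g a) (ht' : 0 < t') (htt' : t ≤ t')
    (hl : SolvesComplementarity g t l) (hl' : SolvesComplementarity g t' l') : l' ≤ l := by
  obtain ⟨hl_nonneg, hgl, -⟩ := hl
  obtain ⟨-, -, hgl'⟩ := hl'
  by_contra! hll'
  have hgl' : t' = g l' := hgl' (hl_nonneg.trans_lt hll')
  have hg_eq : g l = g l' := le_antisymm (by linarith) (hg hll'.le)
  have := hg_strict hll' (by linarith)
  linarith

theorem exists_solvesComplementarity (hg : Continuous g) {c : ℝ} (hc : 0 ≤ c) (hgc : g c ≤ t) :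
    ∃ l, SolvesComplementarity g t l := by
  by_cases hg0 : g 0 ≤ t
  · exact ⟨0, le_rfl, hg0, fun h => (lt_irrefl 0 h).elim⟩
  push Not at hg0
  obtain ⟨l, ⟨hl_nonneg, -⟩, hgl⟩ :=
    intermediate_value_Icc' hc hg.continuousOn ⟨hgc, hg0.le⟩
  exact ⟨l, hl_nonneg, hgl.le, fun _ => hgl.symm⟩

end Complementarity

theorem phi_exists_unique_and_antitone_general (n : ℕ) (θ η : ℝ)
    (Δ : Fin n → ℝ) :
    (∀ s : ℝ, 0 ≤ s → 0 < s + η →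
      ∃! l : ℝ, 0 ≤ l ∧ (∑ k, max (min (η + θ) (Δ k) - l) 0) ≤ s + η ∧
        (0 < l → s + η = ∑ k, max (min (η + θ) (Δ k) - l) 0)) ∧
    (∀ s s' l l' : ℝ, 0 ≤ s → s ≤ s' → 0 < s + η →
      (0 ≤ l ∧ (∑ k, max (min (η + θ) (Δ k) - l) 0) ≤ s + η ∧
        (0 < l → s + η = ∑ k, max (min (η + θ) (Δ k) - l) 0)) →
      (0 ≤ l' ∧ (∑ k, max (min (η + θ) (Δ k) - l') 0) ≤ s' + η ∧
        (0 < l' → s' + η = ∑ k, max (min (η + θ) (Δ k) - l') 0)) →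
      l' ≤ l) := by
  set g : ℝ → ℝ := fun l => ∑ k, max (min (η + θ) (Δ k) - l) 0
  have h_mono : ∀ {t t' l l' : ℝ}, 0 < t' → t ≤ t' →
      SolvesComplementarity g t l → SolvesComplementarity g t' l' → l' ≤ l :=
    SolvesComplementarity.le_of_le (antitone_sum_max_sub _ _)
      fun _ _ => sum_max_sub_lt_of_pos _ _
  refine ⟨fun s _ hst => ?_, fun s s' l l' _ hss' hst hl hl' =>
    h_mono (by linarith) (by linarith) hl hl'⟩
  have hg_vanish : g (max (η + θ) 0) = 0 :=
    sum_max_sub_eq_zero_of_le _ _ fun _ _ => (min_le_left _ _).trans (le_max_left _ _)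
  obtain ⟨l, hl⟩ := exists_solvesComplementarity (continuous_sum_max_sub _ _)
    (le_max_right (η + θ) 0) (hg_vanish.trans_le hst.le)
  exact ⟨l, hl, fun l' hl' => le_antisymm (h_mono hst le_rfl hl hl') (h_mono hst le_rfl hl' hl)⟩

/-- with `g l := Σ_k max{min{η + θ, Δ_k} − l, 0}`, for every `s ≥ 0` with
`s + η > 0` there is a unique `l ≥ 0` with `g l ≤ s + η` and `(l > 0 → g l = s + η)`;
moreover this solution `φ(s)` is nonincreasing in `s`. -/
theorem phi_exists_unique_and_antitone (n : ℕ) (θ η : ℝ) (hθ : 0 ≤ θ) (hη : 0 ≤ η)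
    (Δ : Fin n → ℝ) :
    (∀ s : ℝ, 0 ≤ s → 0 < s + η →
      ∃! l : ℝ, 0 ≤ l ∧ (∑ k, max (min (η + θ) (Δ k) - l) 0) ≤ s + η ∧
        (0 < l → s + η = ∑ k, max (min (η + θ) (Δ k) - l) 0)) ∧
    (∀ s s' l l' : ℝ, 0 ≤ s → s ≤ s' → 0 < s + η →
      (0 ≤ l ∧ (∑ k, max (min (η + θ) (Δ k) - l) 0) ≤ s + η ∧
        (0 < l → s + η = ∑ k, max (min (η + θ) (Δ k) - l) 0)) →
      (0 ≤ l' ∧ (∑ k, max (min (η + θ) (Δ k) - l') 0) ≤ s' + η ∧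
        (0 < l' → s' + η = ∑ k, max (min (η + θ) (Δ k) - l') 0)) →
      l' ≤ l) :=
  phi_exists_unique_and_antitone_general n θ η Δ
end

section
/- In the star network auction, a price vector for the winners satisfies every coalition core constraint and every individual rationality constraint if and only if it satisfies the reduced system of constraints. Precisely, for θ ≥ 0 and p = (p_0, (p_{j,k})_{j,k}) ∈ ℝ^{1+n_1+⋯+n_J}, the following are equivalent: (i) for every feasible coalition C of buyers, Σ_{i ∈ W∖C} p_i ≥ Σ_{i ∈ C∖W} β_i, and p_i ≤ β_i for every i ∈ W (where β_i denotes buyer i's bid); (ii) p_0 + Σ_{k=1}^{n_j} p_{j,k} ≥ C_j for all j ∈ {1,…,J}, b̲_{j,k} ≤ p_{j,k} ≤ b_{j,k} for all (j,k), and v_0 ≤ p_0 ≤ v_0 + θ. -/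
namespace StarSetting

variable (S : StarSetting)

/-- Buyers in the star network auction: `Sum.inl (Sum.inl i)` is the winning single-item
buyer for item `i`, `Sum.inl (Sum.inr i)` is the losing single-item buyer for item `i`,
and `Sum.inr j` is the package buyer for `S_j = {0, (j,1), …, (j,n_j)}`. -/
abbrev Buyer := (S.Idx ⊕ S.Idx) ⊕ Fin S.J

/-- The bundle of items desired by a buyer. -/
def bundle : S.Buyer → Finset S.Idx
  | .inl (.inl i) => {i}
  | .inl (.inr i) => {i}
  | .inr j => insert none (Finset.univ.image fun k : Fin (S.n j) => some ⟨j, k⟩)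

/-- The bid of each buyer, when buyer zero bids `v_0 + θ`. -/
noncomputable def bid (θ : ℝ) : S.Buyer → ℝ
  | .inl (.inl none) => S.v0 + θ
  | .inl (.inl (some jk)) => S.b jk.1 jk.2
  | .inl (.inr none) => S.bl0
  | .inl (.inr (some jk)) => S.bl jk.1 jk.2
  | .inr j => S.C j

/-- The set of winning buyers: one single-item buyer per item. -/
noncomputable def winners : Finset S.Buyer :=
  Finset.univ.image fun i : S.Idx => Sum.inl (Sum.inl i)

/-- A coalition of buyers is feasible if the bundles of its members are pairwise
disjoint. -/
def Feasible (T : Finset S.Buyer) : Prop :=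
  ∀ x ∈ T, ∀ y ∈ T, x ≠ y → Disjoint (S.bundle x) (S.bundle y)

/-- The price paid by each buyer, for a winner price vector `p` indexed by items. -/
noncomputable def buyerPrice (p : EuclideanSpace ℝ S.Idx) : S.Buyer → ℝ
  | .inl (.inl i) => p i
  | _ => 0

end StarSetting
/-! Each non-winner `x` blocks most cheaply together with the winners of all items outside its
bundle, and the core constraint of that coalition reads `bid x ≤ ∑ i ∈ bundle x, p i`: this is
`b̲ ≤ p` for the losing buyers and the package constraint for package buyers. Conversely these
constraints imply every coalition constraint: the non-winners of a feasible coalition have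
pairwise disjoint bundles, all made of items whose winners are outside the coalition, and prices
are nonnegative. Finally `v₀ ≤ p₀` follows from `b̲₀ ≤ p₀`, the package constraints and
`p_{j,k} ≤ b_{j,k}`. -/

theorem Finset.sum_le_sum_of_pairwiseDisjoint {ι α β : Type*} [DecidableEq α]
    [AddCommMonoid β] [PartialOrder β] [IsOrderedAddMonoid β] {s : Finset ι}
    {t : ι → Finset α} {U : Finset α} {f : ι → β} {g : α → β}
    (hdisj : (s : Set ι).PairwiseDisjoint t) (hsub : ∀ x ∈ s, t x ⊆ U)
    (hf : ∀ x ∈ s, f x ≤ ∑ i ∈ t x, g i) (hg : ∀ i ∈ U, 0 ≤ g i) :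
    ∑ x ∈ s, f x ≤ ∑ i ∈ U, g i :=
  calc ∑ x ∈ s, f x ≤ ∑ x ∈ s, ∑ i ∈ t x, g i := Finset.sum_le_sum hf
    _ = ∑ i ∈ s.biUnion t, g i := (Finset.sum_biUnion hdisj).symm
    _ ≤ ∑ i ∈ U, g i :=
      Finset.sum_le_sum_of_subset_of_nonneg (Finset.biUnion_subset.mpr hsub) fun i hi _ => hg i hi

namespace StarSetting

-- Deciding membership in a `Finset S.Buyer` under a binder exceeds the default instance size.
set_option synthInstance.maxSize 256

variable (S : StarSetting)

theorem mem_winners_iff {x : S.Buyer} : x ∈ S.winners ↔ ∃ i, x = .inl (.inl i) := by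
  simp [winners, eq_comm]

theorem sum_bundle_package (p : S.Idx → ℝ) (j : Fin S.J) :
    ∑ i ∈ S.bundle (.inr j), p i = p none + ∑ k, p (some ⟨j, k⟩) := by
  rw [bundle, Finset.sum_insert (by simp),
    Finset.sum_image fun _ _ _ _ h => by simpa using h]

theorem sum_buyerPrice_winners_sdiff (p : EuclideanSpace ℝ S.Idx) (T : Finset S.Buyer) :
    ∑ x ∈ S.winners \ T, S.buyerPrice p x =
      ∑ i ∈ Finset.univ.filter (fun i => (.inl (.inl i) : S.Buyer) ∉ T), p i := by
  rw [winners, Finset.sdiff_eq_filter, Finset.filter_image,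
    Finset.sum_image fun _ _ _ _ h => by simpa using h]
  rfl

noncomputable def blockingCoalition (x : S.Buyer) : Finset S.Buyer :=
  insert x ((Finset.univ.filter fun i => i ∉ S.bundle x).image fun i => .inl (.inl i))

theorem feasible_blockingCoalition (x : S.Buyer) : S.Feasible (S.blockingCoalition x) := by
  intro y hy z hz hyz
  simp only [blockingCoalition, Finset.mem_insert, Finset.mem_image, Finset.mem_filter,
    Finset.mem_univ, true_and] at hy hz
  rcases hy with rfl | ⟨i, hi, rfl⟩ <;> rcases hz with rfl | ⟨k, hk, rfl⟩
  · exact absurd rfl hyz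
  · exact Finset.disjoint_singleton_right.2 hk
  · exact Finset.disjoint_singleton_left.2 hi
  · exact Finset.disjoint_singleton.2 fun h => hyz (h ▸ rfl)

theorem blockingCoalition_sdiff_winners {x : S.Buyer} (hx : x ∉ S.winners) :
    S.blockingCoalition x \ S.winners = {x} := by
  ext y
  simp only [blockingCoalition, Finset.mem_sdiff, Finset.mem_insert, Finset.mem_singleton]
  constructor
  · rintro ⟨rfl | hy, hyW⟩
    · rfl
    · exact absurd (Finset.image_subset_image (Finset.subset_univ _) hy) hyW
  · rintro rfl
    exact ⟨Or.inl rfl, hx⟩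

theorem sum_buyerPrice_winners_sdiff_blockingCoalition {x : S.Buyer} (hx : x ∉ S.winners)
    (p : EuclideanSpace ℝ S.Idx) :
    ∑ y ∈ S.winners \ S.blockingCoalition x, S.buyerPrice p y = ∑ i ∈ S.bundle x, p i := by
  have hne : ∀ i, (.inl (.inl i) : S.Buyer) ≠ x := fun i h => hx (h ▸ S.mem_winners_iff.2 ⟨i, rfl⟩)
  rw [sum_buyerPrice_winners_sdiff]
  congr 1
  ext i
  simp [blockingCoalition, hne]

theorem bid_le_sum_bundle_of_core {θ : ℝ} {p : EuclideanSpace ℝ S.Idx}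
    (hcore : ∀ T : Finset S.Buyer, S.Feasible T →
      ∑ x ∈ T \ S.winners, S.bid θ x ≤ ∑ x ∈ S.winners \ T, S.buyerPrice p x)
    {x : S.Buyer} (hx : x ∉ S.winners) : S.bid θ x ≤ ∑ i ∈ S.bundle x, p i := by
  simpa [S.blockingCoalition_sdiff_winners hx,
    S.sum_buyerPrice_winners_sdiff_blockingCoalition hx] using
    hcore _ (S.feasible_blockingCoalition x)

theorem core_of_bid_le_sum_bundle {θ : ℝ} {p : EuclideanSpace ℝ S.Idx} (hp : ∀ i, 0 ≤ p i)
    (hbid : ∀ x ∉ S.winners, S.bid θ x ≤ ∑ i ∈ S.bundle x, p i)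
    {T : Finset S.Buyer} (hT : S.Feasible T) :
    ∑ x ∈ T \ S.winners, S.bid θ x ≤ ∑ x ∈ S.winners \ T, S.buyerPrice p x := by
  rw [sum_buyerPrice_winners_sdiff]
  refine Finset.sum_le_sum_of_pairwiseDisjoint
    (fun x hx y hy hxy => hT x (Finset.mem_sdiff.1 hx).1 y (Finset.mem_sdiff.1 hy).1 hxy)
    (fun x hx i hi => ?_) (fun x hx => hbid x (Finset.mem_sdiff.1 hx).2) fun i _ => hp i
  obtain ⟨hxT, hxW⟩ := Finset.mem_sdiff.1 hx
  refine Finset.mem_filter.2 ⟨Finset.mem_univ _, fun (hiT : .inl (.inl i) ∈ T) => ?_⟩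
  have hne : x ≠ .inl (.inl i) := by rintro rfl; exact hxW (S.mem_winners_iff.2 ⟨i, rfl⟩)
  exact Finset.disjoint_left.1 (hT x hxT _ hiT hne) hi (Finset.mem_singleton_self i)

theorem forall_notMem_winners_bid_le_iff (θ : ℝ) (p : EuclideanSpace ℝ S.Idx) :
    (∀ x ∉ S.winners, S.bid θ x ≤ ∑ i ∈ S.bundle x, p i) ↔
      S.bl0 ≤ p none ∧ (∀ j k, S.bl j k ≤ p (some ⟨j, k⟩)) ∧
        ∀ j, S.C j ≤ p none + ∑ k, p (some ⟨j, k⟩) := by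
  constructor
  · intro h
    refine ⟨?_, fun j k => ?_, fun j => ?_⟩
    · simpa [bid, bundle] using h (.inl (.inr none)) (by simp [mem_winners_iff])
    · simpa [bid, bundle] using h (.inl (.inr (some ⟨j, k⟩))) (by simp [mem_winners_iff])
    · simpa [bid, sum_bundle_package] using h (.inr j) (by simp [mem_winners_iff])
  · rintro ⟨h0, hbl, hC⟩ ((i | (_ | ⟨j, k⟩)) | j) hx
    · exact absurd (S.mem_winners_iff.2 ⟨i, rfl⟩) hx
    · simpa [bid, bundle] using h0
    · simpa [bid, bundle] using hbl j k
    · simpa [bid, sum_bundle_package] using hC j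

theorem forall_mem_winners_buyerPrice_le_iff (θ : ℝ) (p : EuclideanSpace ℝ S.Idx) :
    (∀ x ∈ S.winners, S.buyerPrice p x ≤ S.bid θ x) ↔
      p none ≤ S.v0 + θ ∧ ∀ j k, p (some ⟨j, k⟩) ≤ S.b j k := by
  simp only [winners, Finset.forall_mem_image, Finset.mem_univ, forall_const, Option.forall,
    Sigma.forall, buyerPrice, bid]

theorem v0_le_of_le_package {p : EuclideanSpace ℝ S.Idx} (h0 : S.bl0 ≤ p none)
    (hC : ∀ j, S.C j ≤ p none + ∑ k, p (some ⟨j, k⟩))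
    (hb : ∀ j k, p (some ⟨j, k⟩) ≤ S.b j k) : S.v0 ≤ p none := by
  refine max_le h0 (Finset.sup'_le _ _ fun j _ => ?_)
  have := Finset.sum_le_sum fun k (_ : k ∈ Finset.univ) => hb j k
  linarith [hC j]

end StarSetting

theorem star_core_constraints_iff_general (S : StarSetting)
    (hbl0 : 0 ≤ S.bl0) (hbl : ∀ j k, 0 ≤ S.bl j k)
    (θ : ℝ) (p : EuclideanSpace ℝ S.Idx) :
    ((∀ T : Finset S.Buyer, S.Feasible T →
        ∑ x ∈ T \ S.winners, S.bid θ x ≤ ∑ x ∈ S.winners \ T, S.buyerPrice p x) ∧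
      (∀ x ∈ S.winners, S.buyerPrice p x ≤ S.bid θ x)) ↔
    ((∀ j, S.C j ≤ p none + ∑ k, p (some ⟨j, k⟩)) ∧
      (∀ j k, S.bl j k ≤ p (some ⟨j, k⟩) ∧ p (some ⟨j, k⟩) ≤ S.b j k) ∧
      S.v0 ≤ p none ∧ p none ≤ S.v0 + θ) := by
  rw [S.forall_mem_winners_buyerPrice_le_iff]
  constructor
  · rintro ⟨hcore, hθ, hb⟩
    obtain ⟨h0, hbl, hC⟩ := (S.forall_notMem_winners_bid_le_iff θ p).1
      fun x hx => S.bid_le_sum_bundle_of_core hcore hx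
    exact ⟨hC, fun j k => ⟨hbl j k, hb j k⟩, S.v0_le_of_le_package h0 hC hb, hθ⟩
  · rintro ⟨hC, hbounds, hv0, hθ⟩
    have h0 : S.bl0 ≤ p none := (le_max_left _ _).trans hv0
    have hp : ∀ i, 0 ≤ p i := by
      rintro (_ | ⟨j, k⟩)
      · exact hbl0.trans h0
      · exact (hbl j k).trans (hbounds j k).1
    have hbid := (S.forall_notMem_winners_bid_le_iff θ p).2
      ⟨h0, fun j k => (hbounds j k).1, hC⟩
    exact ⟨fun T hT => S.core_of_bid_le_sum_bundle hp hbid hT, hθ, fun j k => (hbounds j k).2⟩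

/-- for nonnegative bids, a winner price vector satisfies all coalition
core constraints and individual rationality iff it satisfies the reduced system of
constraints defining the core region of the star network setting. -/
theorem star_core_constraints_iff (S : StarSetting)
    (hbl0 : 0 ≤ S.bl0) (hbl : ∀ j k, 0 ≤ S.bl j k) (hC : ∀ j, 0 ≤ S.C j)
    (θ : ℝ) (hθ : 0 ≤ θ) (p : EuclideanSpace ℝ S.Idx) :
    ((∀ T : Finset S.Buyer, S.Feasible T →
        ∑ x ∈ T \ S.winners, S.bid θ x ≤ ∑ x ∈ S.winners \ T, S.buyerPrice p x) ∧
      (∀ x ∈ S.winners, S.buyerPrice p x ≤ S.bid θ x)) ↔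
    ((∀ j, S.C j ≤ p none + ∑ k, p (some ⟨j, k⟩)) ∧
      (∀ j k, S.bl j k ≤ p (some ⟨j, k⟩) ∧ p (some ⟨j, k⟩) ≤ S.b j k) ∧
      S.v0 ≤ p none ∧ p none ≤ S.v0 + θ) :=
  star_core_constraints_iff_general S hbl0 hbl θ p
end

section
/- For every integer w ≥ 2 and every real δ with 0 < δ ≤ 1/(w−1), any core-selecting payment rule for the market with w single-item buyers and one package buyer bidding w admits a deviation scenario with marginal incentive to deviate at least 1 − 1/w. Precisely: let P be any function assigning to each bid vector b ∈ ℝ^w with b_i ≥ 0 for all i and Σ_{i=1}^w b_i ≥ w a price vector P(b) ∈ ℝ^w satisfying the core conditions 0 ≤ P_i(b) ≤ b_i for all i and Σ_{i=1}^w P_i(b) ≥ w. Then there exist an index i* ∈ {1,…,w} and bid vectors b¹, b² ∈ ℝ^w with b¹_i = b²_i = 1 + δ for all i ≠ i*, b¹_{i*} = 1 − (w−1)δ, and b²_{i*} = 1 + δ (so b²_{i*} − b¹_{i*} = wδ), both satisfying the domain conditions, such that P_{i*}(b²) − P_{i*}(b¹) ≥ (w−1)δ = (1 − 1/w)·(b²_{i*}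 − b¹_{i*}). -/
/-!
Raise every bid to `1 + δ`. The core prices then sum to at least `w`, so some buyer `i*` pays
at least `1`. Now let `i*` shade its bid down to `1 - (w - 1) δ`: the bids sum to exactly `w`,
and a price vector bounded by the bids whose sum reaches `w` must equal the bids, so `i*` pays
only `1 - (w - 1) δ`. The price difference is therefore at least `(w - 1) δ`.
-/

open Finset

section

variable {ι : Type*} [Fintype ι]

theorem exists_one_le_of_card_le_sum [Nonempty ι] {p : ι → ℝ}
    (h : (Fintype.card ι : ℝ) ≤ ∑ i, p i) : ∃ i, 1 ≤ p i := by
  obtain ⟨i, -, hi⟩ := exists_le_of_sum_le univ_nonempty (f := fun _ ↦ (1 : ℝ)) (g := p)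
    (by simpa using h)
  exact ⟨i, hi⟩

theorem eq_of_forall_le_of_sum_le {p b : ι → ℝ} (hle : ∀ i, p i ≤ b i)
    (hsum : ∑ i, b i ≤ ∑ i, p i) (i : ι) : p i = b i :=
  (sum_eq_sum_iff_of_le fun i _ ↦ hle i).1 (le_antisymm (sum_le_sum fun i _ ↦ hle i) hsum) i
    (mem_univ i)

theorem sum_update_const [DecidableEq ι] (i : ι) (c x : ℝ) :
    ∑ j, Function.update (fun _ ↦ c) i x j = (Fintype.card ι - 1) * c + x := by
  rw [sum_update_of_mem (mem_univ i), sum_const, card_sdiff_of_subset (by simp),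
    card_singleton, card_univ, nsmul_eq_mul, Nat.cast_pred (Fintype.card_pos_iff.2 ⟨i⟩)]
  ring

end

theorem core_selecting_worst_case_mid_general (w : ℕ)
    (δ : ℝ) (hδ0 : 0 < δ) (hδ1 : δ ≤ 1 / ((w : ℝ) - 1))
    (P : (Fin w → ℝ) → (Fin w → ℝ))
    (hP : ∀ bv : Fin w → ℝ, (∀ i, 0 ≤ bv i) → (w : ℝ) ≤ ∑ i, bv i →
      (∀ i, 0 ≤ P bv i ∧ P bv i ≤ bv i) ∧ (w : ℝ) ≤ ∑ i, P bv i) :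
    ∃ (istar : Fin w) (b1 b2 : Fin w → ℝ),
      (∀ i, i ≠ istar → b1 i = 1 + δ ∧ b2 i = 1 + δ) ∧
      b1 istar = 1 - ((w : ℝ) - 1) * δ ∧ b2 istar = 1 + δ ∧
      (∀ i, 0 ≤ b1 i) ∧ (w : ℝ) ≤ ∑ i, b1 i ∧
      (∀ i, 0 ≤ b2 i) ∧ (w : ℝ) ≤ ∑ i, b2 i ∧
      ((w : ℝ) - 1) * δ ≤ P b2 istar - P b1 istar := by
  have hw : 0 < (w : ℝ) - 1 := one_div_pos.1 (hδ0.trans_le hδ1)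
  have hδw : ((w : ℝ) - 1) * δ ≤ 1 := by rwa [le_div_iff₀' hw] at hδ1
  have : NeZero w := ⟨by rintro rfl; norm_num at hw⟩
  set b2 : Fin w → ℝ := fun _ ↦ 1 + δ
  have hb2 : ∀ i, 0 ≤ b2 i := fun _ ↦ by positivity
  have hsum2 : (w : ℝ) ≤ ∑ i, b2 i := by
    simp only [b2, sum_const, card_univ, Fintype.card_fin, nsmul_eq_mul]
    nlinarith
  obtain ⟨istar, hpay⟩ : ∃ i, 1 ≤ P b2 i :=
    exists_one_le_of_card_le_sum (by simpa using (hP b2 hb2 hsum2).2)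
  set b1 := Function.update b2 istar (1 - ((w : ℝ) - 1) * δ)
  have hb1 : ∀ i, 0 ≤ b1 i := by
    intro i
    rcases eq_or_ne i istar with rfl | hi
    · simpa [b1] using hδw
    · simpa [b1, hi] using hb2 i
  have hsum1 : ∑ i, b1 i = w := by
    rw [sum_update_const, Fintype.card_fin]; ring
  obtain ⟨hP1, hP1sum⟩ := hP b1 hb1 hsum1.ge
  have htight : P b1 istar = b1 istar :=
    eq_of_forall_le_of_sum_le (fun i ↦ (hP1 i).2) (hsum1.trans_le hP1sum) istar
  refine ⟨istar, b1, b2, fun i hi ↦ ⟨Function.update_of_ne hi _ _, rfl⟩, by simp [b1], rfl,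
    hb1, hsum1.ge, hb2, hsum2, ?_⟩
  rw [htight]
  simp only [b1, Function.update_self]
  linarith

/-- for any core-selecting payment rule `P` for the market with `w`
single-item buyers facing a package buyer bidding `w`, there is a deviation scenario
with marginal incentive to deviate at least `1 − 1/w`. -/
theorem core_selecting_worst_case_mid (w : ℕ) (hw : 2 ≤ w)
    (δ : ℝ) (hδ0 : 0 < δ) (hδ1 : δ ≤ 1 / ((w : ℝ) - 1))
    (P : (Fin w → ℝ) → (Fin w → ℝ))
    (hP : ∀ bv : Fin w → ℝ, (∀ i, 0 ≤ bv i) → (w : ℝ) ≤ ∑ i, bv i →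
      (∀ i, 0 ≤ P bv i ∧ P bv i ≤ bv i) ∧ (w : ℝ) ≤ ∑ i, P bv i) :
    ∃ (istar : Fin w) (b1 b2 : Fin w → ℝ),
      (∀ i, i ≠ istar → b1 i = 1 + δ ∧ b2 i = 1 + δ) ∧
      b1 istar = 1 - ((w : ℝ) - 1) * δ ∧ b2 istar = 1 + δ ∧
      (∀ i, 0 ≤ b1 i) ∧ (w : ℝ) ≤ ∑ i, b1 i ∧
      (∀ i, 0 ≤ b2 i) ∧ (w : ℝ) ≤ ∑ i, b2 i ∧
      ((w : ℝ) - 1) * δ ≤ P b2 istar - P b1 istar :=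
  core_selecting_worst_case_mid_general w δ hδ0 hδ1 P hP
end
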